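/- There exists a discrete Bayesian large-sample estimation problem with a consistent posterior on which a distribution-based Bayes estimator is inconsistent: take Θ = ℕ∪{0}, prior P(θ=θ)=2^{-1-θ}, observations x_n ∈ {0,1} deterministic given θ (x = a sequence of θ ones followed by zeros, or all ones if θ=0). Then the estimator θ̂_n(1^n 0^m) = n has posterior expected loss 0 for every distribution-based loss function, yet θ̂_n → ∞ with probability 1 given θ = 0, so it is inconsistent. -/

import Mathlib

open MeasureTheory ProbabilityTheory Filter Set Topology
open scoped ENNReal

/-- The cylinder event determined by the first `n` observations of `ω`. -/
def cylinder {X : ℕ → Type*} (n : ℕ) (ω : ℕ × (∀ i, X i)) :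
    Set (ℕ × (∀ i, X i)) :=
  {ω' | ∀ i < n, ω'.2 i = ω.2 i}

/-- The deterministic observation sequence associated with parameter `θ`:
`θ` ones followed by zeros, or all ones if `θ = 0`. -/
def detSeq (θ : ℕ) : ℕ → Bool := fun n => decide (θ = 0) || decide (n < θ)

/-!
Given `θ`, the observations are the single path `detSeq θ`, so the joint law is
`∑ θ, 2^{-θ-1} δ_(θ, detSeq θ)` and conditioning on `θ` gives a Dirac mass. Hence two parameters
whose paths agree on the first `n` coordinates induce the same law of the first `n` observations.
After observing `1^n`, only parameters whose path starts with `n` ones (`θ = 0` and `θ ≥ n`) carry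
posterior mass, and all of them agree with `θ = n` there, so every distribution-based loss of the
estimate `n` vanishes on the posterior support. The posterior is nevertheless consistent because
`detSeq` is injective: the cylinders around the true path shrink to that path, whose prior mass is
that of the true parameter alone. But `θ̂ₙ = n` eventually leaves every finite set.
-/

section DeterministicModel

variable {Θ Ω : Type*} [MeasurableSpace Θ] [MeasurableSpace Ω] {w : Θ → ℝ≥0∞} {f : Θ → Ω}

noncomputable def deterministicModel (w : Θ → ℝ≥0∞) (f : Θ → Ω) : Measure (Θ × Ω) :=
  Measure.sum fun θ => w θ • Measure.dirac (θ, f θ)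

lemma deterministicModel_apply {s : Set (Θ × Ω)} (hs : MeasurableSet s) :
    deterministicModel w f s = ∑' θ, s.indicator (fun _ => w θ) (θ, f θ) := by
  simp only [deterministicModel, Measure.sum_apply _ hs, Measure.smul_apply,
    Measure.dirac_apply' _ hs, smul_eq_mul]
  congr 1 with θ
  by_cases h : (θ, f θ) ∈ s <;> simp [h]

lemma isProbabilityMeasure_deterministicModel (hw : ∑' θ, w θ = 1) :
    IsProbabilityMeasure (deterministicModel w f) :=
  ⟨by simpa [deterministicModel_apply MeasurableSet.univ] using hw⟩

lemma deterministicModel_snd_preimage [MeasurableSingletonClass Ω] (hf : Function.Injective f)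
    (θ : Θ) : deterministicModel w f (Prod.snd ⁻¹' {f θ}) = w θ := by
  rw [deterministicModel_apply (measurable_snd (measurableSet_singleton (f θ))),
    tsum_eq_single θ]
  · exact Set.indicator_of_mem (s := Prod.snd ⁻¹' {f θ}) rfl _
  · exact fun θ' hθ' =>
      Set.indicator_of_notMem (s := Prod.snd ⁻¹' {f θ}) (fun h => hθ' (hf h)) _

variable [MeasurableSingletonClass Θ]

lemma deterministicModel_fst_inter (θ : Θ) {s : Set (Θ × Ω)} (hs : MeasurableSet s) :
    deterministicModel w f (Prod.fst ⁻¹' {θ} ∩ s) = s.indicator (fun _ => w θ) (θ, f θ) := by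
  rw [deterministicModel_apply ((measurable_fst (measurableSet_singleton θ)).inter hs),
    tsum_eq_single θ fun θ' hθ' => Set.indicator_of_notMem (fun h => hθ' h.1) _]
  by_cases h : (θ, f θ) ∈ s <;> simp [h]

lemma deterministicModel_fst (θ : Θ) :
    deterministicModel w f (Prod.fst ⁻¹' {θ}) = w θ := by
  simpa using deterministicModel_fst_inter (w := w) (f := f) θ MeasurableSet.univ

lemma cond_fst_deterministicModel {θ : Θ} (hw₀ : w θ ≠ 0) (hw : w θ ≠ ∞) :
    (deterministicModel w f)[|Prod.fst ⁻¹' {θ}] = Measure.dirac (θ, f θ) := by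
  ext s hs
  rw [cond_apply (measurable_fst (measurableSet_singleton θ)), deterministicModel_fst,
    deterministicModel_fst_inter θ hs, Measure.dirac_apply' _ hs]
  by_cases h : (θ, f θ) ∈ s <;> simp [h, ENNReal.inv_mul_cancel hw₀ hw]

lemma cond_fst_deterministicModel_eq_zero {C : Set (Θ × Ω)} (hC : MeasurableSet C) {θ : Θ}
    (h : (θ, f θ) ∉ C) : (deterministicModel w f)[Prod.fst ⁻¹' {θ} | C] = 0 := by
  rw [cond_apply hC, Set.inter_comm, deterministicModel_fst_inter θ hC,
    Set.indicator_of_notMem h, mul_zero]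

end DeterministicModel

section Cylinder

variable {X : ℕ → Type*}

lemma self_mem_cylinder (n : ℕ) (ω : ℕ × ∀ i, X i) : ω ∈ cylinder n ω :=
  fun _ _ => rfl

lemma antitone_cylinder (ω : ℕ × ∀ i, X i) : Antitone fun n => cylinder n ω :=
  fun _ _ hmn _ h i hi => h i (hi.trans_le hmn)

lemma iInter_cylinder (ω : ℕ × ∀ i, X i) : ⋂ n, cylinder n ω = Prod.snd ⁻¹' {ω.2} := by
  ext ω'
  simp only [_root_.cylinder, Set.mem_iInter, Set.mem_ofPred_eq, Set.mem_preimage,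
    Set.mem_singleton_iff, funext_iff]
  exact ⟨fun h i => h (i + 1) i i.lt_succ_self, fun h _ i _ => h i⟩

variable [∀ i, MeasurableSpace (X i)] [∀ i, MeasurableSingletonClass (X i)]

lemma measurableSet_cylinder (n : ℕ) (ω : ℕ × ∀ i, X i) : MeasurableSet (cylinder n ω) := by
  simp only [_root_.cylinder, Set.ofPred_forall]
  exact .iInter fun i => .iInter fun _ =>
    (measurable_pi_apply i).comp measurable_snd (measurableSet_singleton (ω.2 i))

lemma tendsto_measure_cylinder (μ : Measure (ℕ × ∀ i, X i)) [IsFiniteMeasure μ]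
    (ω : ℕ × ∀ i, X i) :
    Tendsto (fun n => μ (cylinder n ω)) atTop (𝓝 (μ (Prod.snd ⁻¹' {ω.2}))) := by
  rw [← iInter_cylinder]
  exact tendsto_measure_iInter_atTop (fun n => (measurableSet_cylinder n ω).nullMeasurableSet)
    (antitone_cylinder ω) ⟨0, measure_ne_top μ _⟩

variable {w : ℕ → ℝ≥0∞} {f : ℕ → ∀ i, X i}

lemma tendsto_cond_fst_deterministicModel_cylinder [IsFiniteMeasure (deterministicModel w f)]
    (hf : Function.Injective f) {θ : ℕ} (hw₀ : w θ ≠ 0) (hw : w θ ≠ ∞) :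
    Tendsto (fun n => (deterministicModel w f)[Prod.fst ⁻¹' {θ} | cylinder n (θ, f θ)])
      atTop (𝓝 1) := by
  have hpost : ∀ n, (deterministicModel w f)[Prod.fst ⁻¹' {θ} | cylinder n (θ, f θ)] =
      (deterministicModel w f (cylinder n (θ, f θ)))⁻¹ * w θ := fun n => by
    rw [cond_apply (measurableSet_cylinder n _), Set.inter_comm,
      deterministicModel_fst_inter θ (measurableSet_cylinder n _),
      Set.indicator_of_mem (self_mem_cylinder n _)]
  have hlim := tendsto_measure_cylinder (deterministicModel w f) (θ, f θ)
  rw [deterministicModel_snd_preimage hf] at hlim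
  simp_rw [hpost, ← ENNReal.inv_mul_cancel hw₀ hw]
  exact ENNReal.Tendsto.mul_const (tendsto_inv_iff.2 hlim) (Or.inr hw)

lemma cond_fst_deterministicModel_cylinder_congr (hw₀ : ∀ θ, w θ ≠ 0) (hw : ∀ θ, w θ ≠ ∞)
    {n θ θ' : ℕ} (h : ∀ i < n, f θ i = f θ' i) (ω : ℕ × ∀ i, X i) :
    (deterministicModel w f)[cylinder n ω | Prod.fst ⁻¹' {θ}] =
      (deterministicModel w f)[cylinder n ω | Prod.fst ⁻¹' {θ'}] := by
  have hmem : (θ, f θ) ∈ cylinder n ω ↔ (θ', f θ') ∈ cylinder n ω :=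
    forall₂_congr fun i hi => by dsimp only; rw [h i hi]
  rw [cond_fst_deterministicModel (hw₀ θ) (hw θ), cond_fst_deterministicModel (hw₀ θ') (hw θ')]
  by_cases hθ' : (θ', f θ') ∈ cylinder n ω
  · rw [Measure.dirac_apply_of_mem hθ', Measure.dirac_apply_of_mem (hmem.2 hθ')]
  · rw [Measure.dirac_apply' _ (measurableSet_cylinder n ω),
      Measure.dirac_apply' _ (measurableSet_cylinder n ω),
      Set.indicator_of_notMem hθ', Set.indicator_of_notMem (mt hmem.1 hθ')]

def IsDistributionBasedLoss (μ : Measure (ℕ × ∀ i, X i)) (L : ℕ → ℕ → ℕ → ℝ≥0∞) : Prop :=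
  ∀ (n : ℕ) (θ θ' : ℕ),
    (∀ x : ∀ i, X i, (μ[|Prod.fst ⁻¹' {θ}]) {ω | ∀ i < n, ω.2 i = x i} =
      (μ[|Prod.fst ⁻¹' {θ'}]) {ω | ∀ i < n, ω.2 i = x i}) → L n θ θ' = 0

lemma tsum_cond_cylinder_mul_loss_eq_zero (hw₀ : ∀ θ, w θ ≠ 0) (hw : ∀ θ, w θ ≠ ∞)
    {L : ℕ → ℕ → ℕ → ℝ≥0∞} (hL : IsDistributionBasedLoss (deterministicModel w f) L)
    {n θ₀ : ℕ} {ω : ℕ × ∀ i, X i} (hθ₀ : (θ₀, f θ₀) ∈ cylinder n ω) :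
    ∑' θ, (deterministicModel w f)[Prod.fst ⁻¹' {θ} | cylinder n ω] * L n θ θ₀ = 0 := by
  refine ENNReal.tsum_eq_zero.2 fun θ => ?_
  by_cases hθ : (θ, f θ) ∈ cylinder n ω
  · rw [hL n θ θ₀ fun x => cond_fst_deterministicModel_cylinder_congr hw₀ hw
      (fun i hi => (hθ i hi).trans (hθ₀ i hi).symm) (0, x), mul_zero]
  · rw [cond_fst_deterministicModel_eq_zero (measurableSet_cylinder n ω) hθ, zero_mul]

end Cylinder

lemma not_tendsto_measure_setOf_mem_singleton_of_tendsto_atTop {Ω : Type*} [MeasurableSpace Ω]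
    (ν : Measure Ω) {est : ℕ → ℕ} (hest : Tendsto est atTop atTop) (θ : ℕ) :
    ¬ Tendsto (fun n => ν {_ω | est n ∈ ({θ} : Set ℕ)}) atTop (𝓝 1) := by
  intro h
  have h0 : Tendsto (fun n => ν {_ω | est n ∈ ({θ} : Set ℕ)}) atTop (𝓝 0) :=
    tendsto_const_nhds.congr' <| (hest.eventually_ne_atTop θ).mono fun n hn => by
      simp [Set.mem_singleton_iff, hn]
  exact one_ne_zero (tendsto_nhds_unique h h0)

lemma detSeq_of_ne_zero {θ : ℕ} (hθ : θ ≠ 0) (i : ℕ) : detSeq θ i = decide (i < θ) := by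
  simp [detSeq, hθ]

lemma detSeq_injective : Function.Injective detSeq := by
  intro a b hab
  by_contra hne
  wlog hlt : a < b generalizing a b
  · exact this hab.symm (Ne.symm hne) (by omega)
  have hb : b ≠ 0 := by omega
  rcases eq_or_ne a 0 with rfl | ha0
  · simpa [detSeq, hb] using congr_fun hab b
  · simpa [detSeq_of_ne_zero ha0, detSeq_of_ne_zero hb, hlt] using congr_fun hab a

lemma tsum_inv_two_pow_succ : ∑' θ : ℕ, ((2 : ℝ≥0∞) ^ (θ + 1))⁻¹ = 1 := by
  simp_rw [ENNReal.inv_pow, ENNReal.tsum_geometric_add_one, ENNReal.one_sub_inv_two, inv_inv,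
    ENNReal.inv_mul_cancel two_ne_zero ENNReal.ofNat_ne_top]

/-- There is a discrete Bayesian large-sample estimation problem with a consistent posterior
(`Θ = ℕ`, prior `2^{-1-θ}`, observations deterministic given `θ`: `θ` ones then zeros, all ones
for `θ = 0`) on which the estimator `θ̂ₙ = n` has posterior expected loss `0` for every
distribution-based loss function, yet `θ̂ₙ → ∞`, so it is inconsistent. -/
theorem distribution_based_bayes_estimator_inconsistent :
    ∃ μ : Measure (ℕ × (ℕ → Bool)), IsProbabilityMeasure μ ∧
      -- the prior is P(θ) = 2^{-1-θ}
      (∀ θ : ℕ, μ (Prod.fst ⁻¹' {θ}) = ((2 : ℝ≥0∞) ^ (θ + 1))⁻¹) ∧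
      -- given θ, the observations are deterministic
      (∀ θ : ℕ, (μ[|Prod.fst ⁻¹' {θ}]) {ω | ω.2 = detSeq θ} = 1) ∧
      -- the problem has a consistent posterior
      (∀ θ : ℕ,
        ∀ᵐ ω ∂(μ[|Prod.fst ⁻¹' {θ}]),
          Tendsto (fun n : ℕ => (μ[|cylinder n ω]) (Prod.fst ⁻¹' {θ})) atTop (𝓝 1)) ∧
      -- for every distribution-based loss function (zero whenever the two parameters induce
      -- identical distributions over the first n observations), the estimator θ̂ₙ = n has
      -- posterior expected loss 0 on all-ones data
      (∀ L : ℕ → ℕ → ℕ → ℝ≥0∞,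
        (∀ (n : ℕ) (θ θ' : ℕ),
          (∀ x : ℕ → Bool,
            (μ[|Prod.fst ⁻¹' {θ}]) {ω | ∀ i < n, ω.2 i = x i} =
              (μ[|Prod.fst ⁻¹' {θ'}]) {ω | ∀ i < n, ω.2 i = x i}) → L n θ θ' = 0) →
        ∀ (n : ℕ) (ω : ℕ × (ℕ → Bool)), (∀ i < n, ω.2 i = true) →
          (∑' θ' : ℕ, (μ[|cylinder n ω]) (Prod.fst ⁻¹' {θ'}) * L n θ' n) = 0) ∧
      -- the estimator θ̂ₙ = n diverges to infinity ...
      (Tendsto (fun n : ℕ => n) atTop atTop ∧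
      -- ... and is inconsistent
      ¬ (∀ θ : ℕ, ∀ U ∈ 𝓝 θ,
          Tendsto (fun n : ℕ => (μ[|Prod.fst ⁻¹' {θ}]) {ω | n ∈ U}) atTop (𝓝 1))) := by
  set w : ℕ → ℝ≥0∞ := fun θ => ((2 : ℝ≥0∞) ^ (θ + 1))⁻¹
  have hw₀ : ∀ θ, w θ ≠ 0 := by simp [w]
  have hw : ∀ θ, w θ ≠ ∞ := by simp [w]
  have hprob := isProbabilityMeasure_deterministicModel (f := detSeq) tsum_inv_two_pow_succ
  refine ⟨deterministicModel w detSeq, hprob, deterministicModel_fst, fun θ => ?_, fun θ => ?_,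
    fun L hL n ω hω => ?_, tendsto_id, fun h => ?_⟩
  · rw [cond_fst_deterministicModel (hw₀ θ) (hw θ)]
    exact Measure.dirac_apply_of_mem rfl
  · rw [cond_fst_deterministicModel (hw₀ θ) (hw θ), ae_dirac_eq, eventually_pure]
    exact tendsto_cond_fst_deterministicModel_cylinder detSeq_injective (hw₀ θ) (hw θ)
  · refine tsum_cond_cylinder_mul_loss_eq_zero hw₀ hw hL fun i hi => ?_
    simp [detSeq, hi, hω i hi]
  · exact not_tendsto_measure_setOf_mem_singleton_of_tendsto_atTop _ tendsto_id 0
      (h 0 {0} (by simp))
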